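/- arXiv:2412.19670 — 6 statements merged into one kernel-verified Lean document; each statement's English description precedes it below -/
import Mathlib

section
/- For a word w of length m ≥ 1, every word occurring in rot(w) has the same coefficient, and this coefficient equals rep(w), the maximal n such that w is the n-fold concatenation of some word v. -/
abbrev Word (d : ℕ) := List (Fin d)
abbrev T (d : ℕ) := Word d →₀ ℝ

/-- The sum of all cyclic rotations of a word (with multiplicity). -/
noncomputable def rot {d : ℕ} (w : Word d) : T d :=
  ∑ k ∈ Finset.range w.length, Finsupp.single (w.rotate k) 1

/-- `rep w` is the maximal `n` such that `w` is the `n`-fold concatenation of some word. -/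
noncomputable def rep {d : ℕ} (w : Word d) : ℕ :=
  sSup {n | ∃ v : Word d, w = (List.replicate n v).flatten}

lemma replicate_of_rotate {d : ℕ} : ∀ (m : ℕ) (w : Word d), w.length = m →
    ∀ p : ℕ, 0 < p → p ∣ w.length → w.rotate p = w →
    w = (List.replicate (w.length / p) (w.take p)).flatten := by
  intro m
  induction m using Nat.strong_induction_on with
  | _ m ih =>
    intro w hm p hp hdvd hrot
    rcases Nat.eq_zero_or_pos w.length with h0 | h0
    · simp [List.eq_nil_of_length_eq_zero h0, h0]
    have hpm : p ≤ w.length := Nat.le_of_dvd h0 hdvd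
    have hda : w.drop p ++ w.take p = w := by
      rw [← List.rotate_eq_drop_append_take hpm]; exact hrot
    obtain ⟨q, hq⟩ := hdvd
    have hq0 : 0 < q := by
      rcases Nat.eq_zero_or_pos q with h | h
      · subst h; rw [mul_zero] at hq; omega
      · exact h
    have hdq : w.length / p = q := by rw [hq]; exact Nat.mul_div_cancel_left q hp
    rw [hdq]
    rcases eq_or_lt_of_le hpm with heq | hlt
    · have hq1 : q = 1 := by nlinarith
      subst hq1
      simp [← heq]
    have hq2 : 2 ≤ q := by nlinarith
    have h2p : p + p ≤ w.length := by nlinarith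
    have hkey : w.take (w.length - p) = w.drop p := by
      have h1 := congrArg (List.take (w.length - p)) hda
      rw [List.take_append_of_le_length (by simp)] at h1
      rw [← h1]
      exact List.take_of_length_le (by simp)
    set w' := w.drop p with hw'
    have hlen' : w'.length = w.length - p := by simp [hw']
    have hdvd' : p ∣ w'.length := by
      rw [hlen', hq]
      exact Nat.dvd_sub (Dvd.intro q rfl) dvd_rfl
    have htake' : w'.take p = w.take p := by
      rw [← hkey, List.take_take, min_eq_left (by omega)]
    have hrot' : w'.rotate p = w' := by
      have hple : p ≤ w'.length := by omega
      have h2 := congrArg (List.drop p) hda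
      rw [List.drop_append_of_le_length (by omega)] at h2
      rw [List.rotate_eq_drop_append_take hple, htake']
      exact h2
    have hrec := ih w'.length (by omega) w' rfl p hp hdvd' hrot'
    have hdq' : w'.length / p = q - 1 := by
      rw [hlen', hq]
      have h3 : p * q - p = p * (q - 1) := by rw [Nat.mul_sub, mul_one]
      rw [h3, Nat.mul_div_cancel_left _ hp]
    rw [hdq', htake'] at hrec
    calc w = w.take p ++ w' := (List.take_append_drop p w).symm
      _ = w.take p ++ (List.replicate (q-1) (w.take p)).flatten := by rw [← hrec]
      _ = (List.replicate q (w.take p)).flatten := by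
          conv_rhs => rw [show q = (q-1)+1 by omega]
          rw [List.replicate_succ, List.flatten_cons]

lemma rotate_mul_self {d : ℕ} (w : Word d) (p : ℕ) (h : w.rotate p = w) :
    ∀ j : ℕ, w.rotate (j * p) = w := by
  intro j
  induction j with
  | zero => simp
  | succ j ihj =>
    have : w.rotate (j * p + p) = (w.rotate (j * p)).rotate p := (List.rotate_rotate w _ _).symm
    rw [Nat.succ_mul, this, ihj, h]

lemma mod_helper (m a b : ℕ) (hb : b ≤ m) (ha : a < m) : ((a + b) % m + (m - b)) % m = a := by
  have h1 : (a + b) % m + (m - b) ≡ a + b + (m - b) [MOD m] := (Nat.mod_modEq _ _).add_right _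
  have h2 : a + b + (m - b) = a + m := by omega
  calc ((a + b) % m + (m - b)) % m = (a + b + (m - b)) % m := h1
    _ = (a + m) % m := by rw [h2]
    _ = a % m := Nat.add_mod_right a m
    _ = a := Nat.mod_eq_of_lt ha

lemma rotate_flatten_replicate {d : ℕ} (n : ℕ) (hn : 0 < n) (v : Word d) :
    ((List.replicate n v).flatten).rotate v.length = (List.replicate n v).flatten := by
  obtain ⟨n, rfl⟩ : ∃ k, n = k + 1 := ⟨n - 1, by omega⟩
  have key : (List.replicate (n+1) v).flatten = v ++ (List.replicate n v).flatten := by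
    rw [List.replicate_succ, List.flatten_cons]
  have key' : (List.replicate (n+1) v).flatten = (List.replicate n v).flatten ++ v := by
    rw [List.replicate_succ', List.flatten_append]; simp
  calc (List.replicate (n+1) v).flatten.rotate v.length
      = (v ++ (List.replicate n v).flatten).rotate v.length := by rw [key]
    _ = (List.replicate n v).flatten ++ v := by
        rw [List.rotate_eq_drop_append_take (by simp), List.drop_left, List.take_left]
    _ = (List.replicate (n+1) v).flatten := key'.symm

lemma stab_card {d : ℕ} (w : Word d) (hw : 1 ≤ w.length) :
    ((Finset.range w.length).filter (fun k => w.rotate k = w)).card = rep w := by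
  set m := w.length with hm
  set Q : Set ℕ := {k | 0 < k ∧ w.rotate k = w} with hQ
  have hmQ : m ∈ Q := ⟨hw, List.rotate_length w⟩
  set p := sInf Q with hpdef
  obtain ⟨hp0, hprot⟩ : p ∈ Q := Nat.sInf_mem ⟨m, hmQ⟩
  have hdvd : ∀ k, w.rotate k = w → p ∣ k := by
    intro k
    induction k using Nat.strong_induction_on with
    | _ k ihk =>
      intro hk
      rcases Nat.eq_zero_or_pos k with rfl | hk0
      · exact dvd_zero p
      have hpk : p ≤ k := Nat.sInf_le ⟨hk0, hk⟩
      have h1 : (w.rotate (k - p)).rotate p = w.rotate p := by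
        rw [List.rotate_rotate, Nat.sub_add_cancel hpk, hk, hprot]
      have hsub : w.rotate (k - p) = w := List.rotate_eq_rotate.mp h1
      have hdd : p ∣ k - p := ihk (k - p) (by omega) hsub
      have : p ∣ (k - p) + p := Nat.dvd_add hdd dvd_rfl
      rwa [Nat.sub_add_cancel hpk] at this
  have hpm : p ∣ m := hdvd m (List.rotate_length w)
  have hfilter : (Finset.range m).filter (fun k => w.rotate k = w)
      = (Finset.range (m / p)).image (· * p) := by
    ext k
    simp only [Finset.mem_filter, Finset.mem_image, Finset.mem_range]
    constructor
    · rintro ⟨hk, hrk⟩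
      obtain ⟨j, rfl⟩ := hdvd k hrk
      refine ⟨j, ?_, by ring⟩
      refine (Nat.lt_div_iff_mul_lt' hpm j).mpr ?_
      rw [mul_comm] at hk ⊢
      omega
    · rintro ⟨j, hj, rfl⟩
      have hjm : j * p < m := by
        have := (Nat.lt_div_iff_mul_lt' hpm j).mp hj
        rw [mul_comm]
        exact this
      exact ⟨hjm, rotate_mul_self w p hprot j⟩
  have hinj : Function.Injective (· * p) := fun a b h => by
    exact Nat.eq_of_mul_eq_mul_right hp0 h
  have hcard : ((Finset.range m).filter (fun k => w.rotate k = w)).card = m / p := by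
    rw [hfilter, Finset.card_image_of_injective _ hinj, Finset.card_range]
  rw [hcard]
  -- now rep w = m / p
  set S : Set ℕ := {n | ∃ v : Word d, w = (List.replicate n v).flatten} with hS
  have hmem : m / p ∈ S := by
    exact ⟨w.take p, replicate_of_rotate w.length w rfl p hp0 hpm hprot⟩
  have hub : ∀ n ∈ S, n ≤ m / p := by
    rintro n ⟨v, hv⟩
    rcases Nat.eq_zero_or_pos n with rfl | hn0
    · exact Nat.zero_le _
    have hlen : m = n * v.length := by
      rw [hm, hv]; simp
    have hv0 : 0 < v.length := by
      rcases Nat.eq_zero_or_pos v.length with h | h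
      · rw [h, mul_zero] at hlen; omega
      · exact h
    have hrotv : w.rotate v.length = w := by
      rw [hv]; exact rotate_flatten_replicate n hn0 v
    have hpv : p ≤ v.length := Nat.sInf_le ⟨hv0, hrotv⟩
    have hn : n = m / v.length := by
      rw [hlen, Nat.mul_div_cancel _ hv0]
    rw [hn]
    exact Nat.div_le_div_left hpv hp0
  have hbdd : BddAbove S := ⟨m / p, fun n hn => hub n hn⟩
  have hne : S.Nonempty := ⟨1, ⟨w, by simp⟩⟩
  rw [rep]
  exact (le_antisymm (csSup_le hne hub) (le_csSup hbdd hmem)).symm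

lemma card_filter_rotate_eq {d : ℕ} (w v : Word d) (hw : 1 ≤ w.length)
    (k0 : ℕ) (hk0 : k0 < w.length) (hv : w.rotate k0 = v) :
    ((Finset.range w.length).filter (fun k => w.rotate k = v)).card
      = ((Finset.range w.length).filter (fun k => w.rotate k = w)).card := by
  have hm0 : 0 < w.length := hw
  apply Finset.card_bij' (fun j _ => (j + (w.length - k0)) % w.length)
    (fun i _ => (i + k0) % w.length)
  · intro a ha
    simp only [Finset.mem_filter, Finset.mem_range] at ha ⊢
    refine ⟨Nat.mod_lt _ hm0, ?_⟩
    rw [List.rotate_mod, ← List.rotate_rotate, ha.2, ← hv, List.rotate_rotate,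
      Nat.add_sub_cancel' (le_of_lt hk0), List.rotate_length]
  · intro a ha
    simp only [Finset.mem_filter, Finset.mem_range] at ha ⊢
    refine ⟨Nat.mod_lt _ hm0, ?_⟩
    rw [List.rotate_mod, ← List.rotate_rotate, ha.2, hv]
  · intro a ha
    simp only [Finset.mem_filter, Finset.mem_range] at ha
    have := mod_helper w.length a (w.length - k0) (by omega) ha.1
    rwa [Nat.sub_sub_self (le_of_lt hk0)] at this
  · intro a ha
    simp only [Finset.mem_filter, Finset.mem_range] at ha
    exact mod_helper w.length a k0 (le_of_lt hk0) ha.1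

lemma rot_apply {d : ℕ} (w v : Word d) :
    (rot w) v = ((Finset.range w.length).filter (fun k => w.rotate k = v)).card := by
  rw [rot, Finsupp.finset_sum_apply, Finset.card_filter]
  push_cast
  refine Finset.sum_congr rfl fun k _ => ?_
  rw [Finsupp.single_apply]

/-- Every word occurring in `rot w` has the same coefficient, namely `rep w`. -/
theorem stmt_1 {d : ℕ} (w : Word d) (hw : 1 ≤ w.length) (v : Word d)
    (hv : (rot w) v ≠ 0) : (rot w) v = rep w := by
  rw [rot_apply] at hv ⊢
  have hne : ((Finset.range w.length).filter (fun k => w.rotate k = v)).Nonempty := by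
    rw [Finset.nonempty_iff_ne_empty]
    intro h
    rw [h] at hv
    simp at hv
  obtain ⟨k0, hk0⟩ := hne
  simp only [Finset.mem_filter, Finset.mem_range] at hk0
  rw [card_filter_rotate_eq w v hw k0 hk0.1 hk0.2, stab_card w hw]
end

section
/- For any word w and any two homogeneous tensors M, N (words) of lengths m and n with m + n = |w|, the pairing ⟨MN − NM, rot(w)⟩ = 0, where MN denotes concatenation. Hence rot(w) annihilates all commutators [M,N] of homogeneous tensors of complementary degrees. -/
/-- The bilinear pairing making the words orthonormal. -/
noncomputable def pair {d : ℕ} (f g : T d) : ℝ := f.sum fun x c => c * g x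

/-- The concatenation product on the tensor algebra. -/
noncomputable def catMul {d : ℕ} (f g : T d) : T d :=
  f.sum fun u a => g.sum fun v b => Finsupp.single (u ++ v) (a * b)

lemma rot_apply_s2 {d : ℕ} (w x : Word d) :
    rot w x = ∑ k ∈ Finset.range w.length, if w.rotate k = x then (1:ℝ) else 0 := by
  simp [rot, Finsupp.finset_sum_apply, Finsupp.single_apply]

lemma mod_cancel (L a b k : ℕ) (hk : k < L) (hab : a + b = L) :
    ((k + a) % L + b) % L = k := by
  rw [Nat.mod_add_mod, add_assoc, hab, Nat.add_mod_right, Nat.mod_eq_of_lt hk]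

lemma rot_cycle {d : ℕ} (w u v : Word d) (h : u.length + v.length = w.length) :
    rot w (u ++ v) = rot w (v ++ u) := by
  set L := w.length with hL
  rw [rot_apply_s2, rot_apply_s2]
  have rotuv : (u ++ v).rotate u.length = v ++ u := by
    rw [List.rotate_eq_drop_append_take (by simp), List.drop_left, List.take_left]
  have rotvu : (v ++ u).rotate v.length = u ++ v := by
    rw [List.rotate_eq_drop_append_take (by simp), List.drop_left, List.take_left]
  refine Finset.sum_nbij' (fun k => (k + u.length) % L) (fun k => (k + v.length) % L) ?_ ?_ ?_ ?_ ?_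
  · intro k hk
    simp only [Finset.mem_range] at hk ⊢
    exact Nat.mod_lt _ (by omega)
  · intro k hk
    simp only [Finset.mem_range] at hk ⊢
    exact Nat.mod_lt _ (by omega)
  · intro k hk
    simp only [Finset.mem_range] at hk
    exact mod_cancel L u.length v.length k hk h
  · intro k hk
    simp only [Finset.mem_range] at hk
    exact mod_cancel L v.length u.length k hk (by omega)
  · intro k hk
    simp only [Finset.mem_range] at hk
    have h1 : w.rotate ((k + u.length) % L) = (w.rotate k).rotate u.length := by
      rw [hL, List.rotate_mod, ← List.rotate_rotate]
    have key : (w.rotate k = u ++ v) ↔ ((w.rotate k).rotate u.length = v ++ u) := by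
      constructor
      · intro hx; rw [hx]; exact rotuv
      · intro hx
        have h2 : ((w.rotate k).rotate u.length).rotate v.length = w.rotate k := by
          rw [List.rotate_rotate, h, hL, ← List.length_rotate w k, List.rotate_length]
        rw [← h2, hx, rotvu]
    simp only [h1, key]

lemma pair_catMul {d : ℕ} (M N g : T d) :
    pair (catMul M N) g = M.sum fun u a => N.sum fun v b => (a * b) * g (u ++ v) := by
  unfold pair catMul
  rw [Finsupp.sum_sum_index (by simp) (by intros; rw [add_mul])]
  refine Finsupp.sum_congr fun u hu => ?_
  rw [Finsupp.sum_sum_index (by simp) (by intros; rw [add_mul])]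
  refine Finsupp.sum_congr fun v hv => ?_
  rw [Finsupp.sum_single_index (by simp)]

/-- `rot w` annihilates all commutators of homogeneous tensors of complementary degrees. -/
theorem stmt_2 {d m n : ℕ} (w : Word d) (M N : T d)
    (hmn : m + n = w.length)
    (hM : ∀ u ∈ M.support, u.length = m)
    (hN : ∀ u ∈ N.support, u.length = n) :
    pair (catMul M N - catMul N M) (rot w) = 0 := by
  have hsub : pair (catMul M N - catMul N M) (rot w)
      = pair (catMul M N) (rot w) - pair (catMul N M) (rot w) := by
    unfold pair
    apply Finsupp.sum_sub_index
    intros; ring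
  rw [hsub, pair_catMul, pair_catMul, sub_eq_zero]
  simp only [Finsupp.sum]
  rw [Finset.sum_comm (s := N.support)]
  refine Finset.sum_congr rfl fun u hu => Finset.sum_congr rfl fun v hv => ?_
  rw [rot_cycle w u v (by rw [hM u hu, hN v hv]; exact hmn)]
  ring
end

section
/- In the free Lie algebra L over ℝ^d (realized inside the tensor algebra with bracket [x,y] = xy − yx), the span of brackets [L, T] of Lie polynomials with arbitrary tensors equals the span of brackets [v, T] of degree-one elements (letters) with arbitrary tensors: [FL(ℝ^d), T(ℝ^d)] = [ℝ^d, T(ℝ^d)]. -/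
/-- The letters `1, ..., d`, i.e. a copy of the standard basis of `ℝ^d` in degree one. -/
def letters (d : ℕ) : Set (T d) := Set.range fun i : Fin d => Finsupp.single [i] (1 : ℝ)

/-- The free Lie algebra: the smallest subspace of the tensor algebra containing the
letters and closed under the commutator bracket `[x,y] = xy - yx`. -/
noncomputable def FL (d : ℕ) : Submodule ℝ (T d) :=
  sInf {p | letters d ⊆ ↑p ∧ ∀ x ∈ p, ∀ y ∈ p, catMul x y - catMul y x ∈ p}

/- Auxiliary material -/

/-- The tensor algebra as the monoid algebra of the free monoid, definitionally equal to `T d`. -/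
abbrev MAux (d : ℕ) := MonoidAlgebra ℝ (FreeMonoid (Fin d))

lemma catMul_eq_mul {d : ℕ} (f g : MAux d) : catMul f.coeff g.coeff = (f * g).coeff := by
  rw [MonoidAlgebra.mul_def]
  simp only [MonoidAlgebra.coeff_finsuppSum, MonoidAlgebra.coeff_single]
  rfl

/-- The span of brackets of letters with arbitrary tensors. -/
noncomputable def Saux (d : ℕ) : Submodule ℝ (T d) :=
  Submodule.span ℝ {x : T d | ∃ l ∈ letters d, ∃ t : T d, x = catMul l t - catMul t l}

/-- The submodule of `L` all of whose brackets with tensors lie in `Saux d`. -/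
noncomputable def Paux (d : ℕ) : Submodule ℝ (T d) where
  carrier := {L : T d | ∀ t : T d, catMul L t - catMul t L ∈ Saux d}
  zero_mem' := by
    intro t
    have h0 : catMul (0 : T d) t - catMul t 0 = 0 := by
      have : ∀ c : MAux d, (0 : MAux d) * c - c * 0 = 0 := by intro c; noncomm_ring
      have h := congrArg MonoidAlgebra.coeff (this (.ofCoeff t))
      simp only [MonoidAlgebra.coeff_sub, MonoidAlgebra.coeff_add, MonoidAlgebra.coeff_smul, MonoidAlgebra.coeff_zero, ← catMul_eq_mul, MonoidAlgebra.coeff_ofCoeff] at h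
      exact h
    rw [h0]; exact (Saux d).zero_mem
  add_mem' := by
    intro x y hx hy t
    have key : catMul (x + y) t - catMul t (x + y)
        = (catMul x t - catMul t x) + (catMul y t - catMul t y) := by
      have : ∀ a b c : MAux d, (a + b) * c - c * (a + b)
          = (a * c - c * a) + (b * c - c * b) := by intro a b c; noncomm_ring
      have h := congrArg MonoidAlgebra.coeff (this (.ofCoeff x) (.ofCoeff y) (.ofCoeff t))
      simp only [MonoidAlgebra.coeff_sub, MonoidAlgebra.coeff_add, MonoidAlgebra.coeff_smul, MonoidAlgebra.coeff_zero, ← catMul_eq_mul, MonoidAlgebra.coeff_ofCoeff] at h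
      exact h
    rw [key]; exact (Saux d).add_mem (hx t) (hy t)
  smul_mem' := by
    intro c x hx t
    have key : catMul (c • x) t - catMul t (c • x)
        = c • (catMul x t - catMul t x) := by
      have : ∀ a b : MAux d, (c • a) * b - b * (c • a) = c • (a * b - b * a) := by
        intro a b; rw [smul_mul_assoc, mul_smul_comm, smul_sub]
      have h := congrArg MonoidAlgebra.coeff (this (.ofCoeff x) (.ofCoeff t))
      simp only [MonoidAlgebra.coeff_sub, MonoidAlgebra.coeff_add, MonoidAlgebra.coeff_smul, MonoidAlgebra.coeff_zero, ← catMul_eq_mul, MonoidAlgebra.coeff_ofCoeff] at h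
      exact h
    rw [key]; exact (Saux d).smul_mem c (hx t)

lemma letters_subset_FL (d : ℕ) : letters d ⊆ ↑(FL d) := fun x hx =>
  Submodule.mem_sInf.2 fun _p hp => hp.1 hx

lemma FL_le_Paux (d : ℕ) : FL d ≤ Paux d := by
  apply sInf_le
  constructor
  · intro l hl t
    exact Submodule.subset_span ⟨l, hl, t, rfl⟩
  · intro x hx y hy t
    have key : catMul (catMul x y - catMul y x) t - catMul t (catMul x y - catMul y x)
        = (catMul x (catMul y t - catMul t y) - catMul (catMul y t - catMul t y) x)
          - (catMul y (catMul x t - catMul t x) - catMul (catMul x t - catMul t x) y) := by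
      have : ∀ a b c : MAux d, (a * b - b * a) * c - c * (a * b - b * a)
          = (a * (b * c - c * b) - (b * c - c * b) * a)
            - (b * (a * c - c * a) - (a * c - c * a) * b) := by
        intro a b c; noncomm_ring
      have h := congrArg MonoidAlgebra.coeff (this (.ofCoeff x) (.ofCoeff y) (.ofCoeff t))
      simp only [MonoidAlgebra.coeff_sub, MonoidAlgebra.coeff_add, MonoidAlgebra.coeff_smul, MonoidAlgebra.coeff_zero, ← catMul_eq_mul, MonoidAlgebra.coeff_ofCoeff] at h
      exact h
    rw [key]
    exact (Saux d).sub_mem (hx _) (hy _)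

/-- `[FL(ℝ^d), T(ℝ^d)] = [ℝ^d, T(ℝ^d)]` as linear spans of commutators. -/
theorem stmt_3 (d : ℕ) :
    Submodule.span ℝ {x : T d | ∃ L ∈ FL d, ∃ t : T d, x = catMul L t - catMul t L} =
    Submodule.span ℝ {x : T d | ∃ l ∈ letters d, ∃ t : T d, x = catMul l t - catMul t l} := by
  apply le_antisymm
  · rw [Submodule.span_le]
    rintro x ⟨L, hL, t, rfl⟩
    exact FL_le_Paux d hL t
  · apply Submodule.span_mono
    rintro x ⟨l, hl, t, rfl⟩
    exact ⟨l, letters_subset_FL d hl, t, rfl⟩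
end

section
/- Let φ be a homogeneous element of degree m in T(ℝ^d) such that ⟨iψ − ψi, φ⟩ = 0 for every letter i and every tensor ψ with zero constant term. Then φ is invariant under the cyclic shift: φ = σ_m(φ), where σ_m is the linear map permuting each word of length m by moving its last letter to the front. -/
/-- The cyclic shift taking the last letter of each word to the front, extended linearly. -/
noncomputable def shift {d : ℕ} (f : T d) : T d :=
  Finsupp.mapDomain (fun w : Word d => w.rotate (w.length - 1)) f

/-- The cyclic shift as an equivalence on words. -/
def rotEquiv (d : ℕ) : Word d ≃ Word d where
  toFun w := w.rotate (w.length - 1)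
  invFun w := w.rotate 1
  left_inv w := by
    cases w with
    | nil => simp
    | cons a l =>
      dsimp only
      rw [List.rotate_rotate]
      have : (a :: l).length - 1 + 1 = (a :: l).length := by simp
      rw [this, List.rotate_length]
  right_inv w := by
    cases w with
    | nil => simp
    | cons a l =>
      dsimp only
      simp only [List.rotate_rotate, List.length_rotate]
      have : 1 + ((a :: l).length - 1) = (a :: l).length := by simp [Nat.add_comm]
      rw [this, List.rotate_length]

lemma pair_single {d : ℕ} (w : Word d) (c : ℝ) (g : T d) :
    pair (Finsupp.single w c) g = c * g w := by
  simp [pair, Finsupp.sum_single_index]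

lemma catMul_single_single {d : ℕ} (u v : Word d) (a b : ℝ) :
    catMul (Finsupp.single u a) (Finsupp.single v b) = Finsupp.single (u ++ v) (a * b) := by
  unfold catMul
  rw [Finsupp.sum_single_index, Finsupp.sum_single_index]
  · simp
  · simp

lemma pair_sub {d : ℕ} (f g φ : T d) : pair (f - g) φ = pair f φ - pair g φ := by
  unfold pair
  rw [Finsupp.sum_sub_index]
  intro w a b
  ring

/-- A degree-`m` homogeneous element annihilating all commutators `iψ - ψi` with `i` a letter
and `ψ` of zero constant term is invariant under the cyclic shift. -/
theorem stmt_4 {d m : ℕ} (φ : T d) (hφ : ∀ u ∈ φ.support, u.length = m)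
    (h : ∀ (i : Fin d) (ψ : T d), ψ [] = 0 →
      pair (catMul (Finsupp.single [i] 1) ψ - catMul ψ (Finsupp.single [i] 1)) φ = 0) :
    φ = shift φ := by
  have key : ∀ (i : Fin d) (v : Word d), v ≠ [] → φ (i :: v) = φ (v ++ [i]) := by
    intro i v hv
    have hψ : (Finsupp.single v (1:ℝ)) [] = 0 := by
      rw [Finsupp.single_apply, if_neg (by simpa using Ne.symm hv)]
    have := h i (Finsupp.single v 1) hψ
    rw [pair_sub, catMul_single_single, catMul_single_single, pair_single, pair_single] at this
    simp only [one_mul, List.singleton_append] at this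
    linarith
  have hshift : shift φ = Finsupp.equivMapDomain (rotEquiv d) φ := by
    rw [Finsupp.equivMapDomain_eq_mapDomain]
    rfl
  ext w
  rw [hshift, Finsupp.equivMapDomain_apply]
  show φ w = φ (w.rotate 1)
  cases w with
  | nil => simp
  | cons i v =>
    cases v with
    | nil => simp
    | cons b l =>
      rw [List.rotate_cons_succ, List.rotate_zero]
      exact key i (b :: l) (by simp)
end

section
/- If v is a tensor such that ⟨v, w ⧢ j⟩ = 0 for every word w and letter j (i.e., v ∈ S^⊥, orthogonal to the shuffle ideal generated by letters), then for any letters i, j and word w: ⟨vi − iv, w⧢j⟩ = ⟨v⊗i, w⊗j⟩ − ⟨i⊗v, j⊗w⟩, and consequently the commutator [v, i] = vi − iv again lies in S^⊥. -/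
noncomputable def shuffleW {d : ℕ} : Word d → Word d → T d
  | [], v => Finsupp.single v 1
  | u, [] => Finsupp.single u 1
  | a :: u, b :: v =>
      Finsupp.mapDomain (List.cons a) (shuffleW u (b :: v)) +
      Finsupp.mapDomain (List.cons b) (shuffleW (a :: u) v)
  termination_by u v => u.length + v.length

section Aux

variable {d : ℕ}

lemma shuffleW_nil (w : Word d) : shuffleW [] w = Finsupp.single w 1 := by rw [shuffleW]

lemma shuffleW_cons (a j : Fin d) (u : Word d) : shuffleW (a::u) [j] =
    Finsupp.mapDomain (List.cons a) (shuffleW u [j]) +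
    Finsupp.single (j::a::u) 1 := by
  rw [shuffleW]
  congr 1
  rw [shuffleW]
  · exact Finsupp.mapDomain_single
  · exact fun h => by cases h

lemma cons_inj (a : Fin d) : Function.Injective (List.cons a : Word d → Word d) :=
  fun x y h => by injection h

lemma concat_inj (c : Fin d) : Function.Injective (fun u : Word d => u ++ [c]) := by
  intro x y h
  have := congrArg List.reverse h
  simp at this
  exact this

lemma concat_eq_concat_iff (u s : Word d) (i c : Fin d) :
    u ++ [i] = s ++ [c] ↔ u = s ∧ i = c := by
  constructor
  · intro h
    have := congrArg List.reverse h
    simp at this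
    exact ⟨this.2, this.1⟩
  · rintro ⟨rfl, rfl⟩; rfl

lemma shuffle_concat (s : Word d) (c j : Fin d) :
    shuffleW (s ++ [c]) [j] =
      Finsupp.mapDomain (fun u : Word d => u ++ [c]) (shuffleW s [j]) +
      Finsupp.single (s ++ [c, j]) 1 := by
  induction s with
  | nil =>
      rw [List.nil_append, shuffleW_cons, shuffleW_nil,
        Finsupp.mapDomain_single, Finsupp.mapDomain_single]
      simp only [List.nil_append, List.singleton_append, List.cons_append, List.append_nil]
      abel
  | cons a s ih =>
      have h1 : (a::s) ++ [c] = a :: (s ++ [c]) := rfl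
      rw [h1, shuffleW_cons, ih, Finsupp.mapDomain_add, Finsupp.mapDomain_single,
        shuffleW_cons, Finsupp.mapDomain_add, Finsupp.mapDomain_single]
      rw [← Finsupp.mapDomain_comp, ← Finsupp.mapDomain_comp]
      have h2 : ((fun u : Word d => u ++ [c]) ∘ List.cons a)
          = (List.cons a ∘ fun u : Word d => u ++ [c]) := by
        funext u; simp
      rw [h2]
      have h3 : a :: (s ++ [c, j]) = (a :: s) ++ [c, j] := rfl
      have h4 : (j :: (a :: s)) ++ [c] = j :: a :: (s ++ [c]) := rfl
      rw [h3, h4]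
      abel

lemma pair_sub_left (f g h : T d) : pair (f - g) h = pair f h - pair g h := by
  unfold pair
  apply Finsupp.sum_sub_index
  intro a b₁ b₂
  rw [sub_mul]

lemma pair_mapDomain (e : Word d → Word d) (f g : T d) :
    pair (Finsupp.mapDomain e f) g = f.sum fun u c => c * g (e u) := by
  unfold pair
  apply Finsupp.sum_mapDomain_index
  · intro b; rw [zero_mul]
  · intro b m₁ m₂; rw [add_mul]

lemma catMul_single_right (f : T d) (i : Fin d) :
    catMul f (Finsupp.single [i] 1) = Finsupp.mapDomain (fun u : Word d => u ++ [i]) f := by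
  unfold catMul Finsupp.mapDomain
  apply Finsupp.sum_congr
  intro u _
  rw [Finsupp.sum_single_index] <;> simp

lemma catMul_single_left (f : T d) (i : Fin d) :
    catMul (Finsupp.single [i] 1) f = Finsupp.mapDomain (List.cons i) f := by
  unfold catMul Finsupp.mapDomain
  rw [Finsupp.sum_single_index]
  · apply Finsupp.sum_congr
    intro u _
    simp
  · simp

lemma mapDomain_cons_apply_cons (a b : Fin d) (F : T d) (u : Word d) :
    (Finsupp.mapDomain (List.cons a) F) (b :: u) = if a = b then F u else 0 := by
  split
  · next h => subst h; exact Finsupp.mapDomain_apply (cons_inj a) F u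
  · next h =>
      apply Finsupp.mapDomain_notin_range
      rintro ⟨x, hx⟩
      exact h (List.head_eq_of_cons_eq hx)

lemma mapDomain_concat_apply_concat (c i : Fin d) (F : T d) (u : Word d) :
    (Finsupp.mapDomain (fun u : Word d => u ++ [c]) F) (u ++ [i])
      = if c = i then F u else 0 := by
  split
  · next h => subst h; exact Finsupp.mapDomain_apply (concat_inj c) F u
  · next h =>
      apply Finsupp.mapDomain_notin_range
      rintro ⟨x, hx⟩
      exact h ((concat_eq_concat_iff x u c i).mp hx).2

lemma sum_mul_delta (f : T d) (x : Word d) :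
    (f.sum fun u c => c * (if u = x then (1:ℝ) else 0)) = f x := by
  have h1 : (f.sum fun u c => c * (if u = x then (1:ℝ) else 0))
      = f.sum fun u c => if u = x then c else 0 := by
    apply Finsupp.sum_congr
    intro u _
    by_cases h : u = x
    · rw [if_pos h, if_pos h, mul_one]
    · rw [if_neg h, if_neg h, mul_zero]
  rw [h1, Finsupp.sum]
  have h2 : (∑ u ∈ f.support, if u = x then f u else 0)
      = if x ∈ f.support then f x else 0 := Finset.sum_ite_eq' f.support x (fun u => f u)
  rw [h2]
  split
  · rfl
  · next h => exact (Finsupp.notMem_support_iff.mp h).symm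

end Aux

/-- If `v` is orthogonal to the shuffle ideal generated by the letters, then for any letter `i`
the commutator `vi - iv` pairs with `w ⧢ j` as `⟨v⊗i, w⊗j⟩ - ⟨i⊗v, j⊗w⟩`, and consequently
`[v, i]` again lies in `S^⊥`. -/
theorem stmt_11 {d : ℕ} (v : T d)
    (hv : ∀ (w : Word d) (j : Fin d), pair v (shuffleW w [j]) = 0) :
    ∀ i : Fin d,
      (∀ (w : Word d) (j : Fin d),
        pair (catMul v (Finsupp.single [i] 1) - catMul (Finsupp.single [i] 1) v) (shuffleW w [j])
          = v w * (if i = j then (1:ℝ) else 0) - (if i = j then (1:ℝ) else 0) * v w) ∧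
      (∀ (w : Word d) (j : Fin d),
        pair (catMul v (Finsupp.single [i] 1) - catMul (Finsupp.single [i] 1) v) (shuffleW w [j])
          = 0) := by
  intro i
  -- ⟨vi, w ⧢ j⟩ = δ_{ij} v(w)
  have hvi : ∀ (w : Word d) (j : Fin d),
      pair (catMul v (Finsupp.single [i] 1)) (shuffleW w [j])
        = (if i = j then (1:ℝ) else 0) * v w := by
    intro w j
    rw [catMul_single_right, pair_mapDomain]
    rcases List.eq_nil_or_concat w with rfl | ⟨s, c, rfl⟩
    · rw [shuffleW_nil]
      have heq : (v.sum fun u cc => cc * (Finsupp.single ([j] : Word d) 1) (u ++ [i]))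
          = v.sum fun u cc => cc *
              ((if i = j then (1:ℝ) else 0) * (if u = ([] : Word d) then 1 else 0)) := by
        apply Finsupp.sum_congr
        intro u _
        congr 1
        rw [Finsupp.single_apply]
        have hiff : ([j] : Word d) = u ++ [i] ↔ u = [] ∧ i = j := by
          rw [show ([j] : Word d) = [] ++ [j] from rfl, eq_comm, concat_eq_concat_iff]
        rw [if_congr hiff rfl rfl]
        by_cases h1 : u = ([] : Word d) <;> by_cases h2 : i = j <;> simp [h1, h2]
      rw [heq]
      by_cases h2 : i = j
      · simp only [h2, if_true, one_mul]
        rw [sum_mul_delta]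
      · simp [h2]
    · simp only [List.concat_eq_append]
      rw [shuffle_concat]
      have hsplit : (v.sum fun u cc => cc *
            (((Finsupp.mapDomain (fun u : Word d => u ++ [c]) (shuffleW s [j])
              + Finsupp.single (s ++ [c, j]) 1) : T d) (u ++ [i])))
          = (v.sum fun u cc => cc * (if c = i then (shuffleW s [j]) u else 0))
            + (v.sum fun u cc => cc * ((if i = j then (1:ℝ) else 0)
                * (if u = (s ++ [c] : Word d) then 1 else 0))) := by
        rw [← Finsupp.sum_add]
        apply Finsupp.sum_congr
        intro u _
        rw [Finsupp.add_apply, mapDomain_concat_apply_concat, mul_add]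
        congr 1
        rw [Finsupp.single_apply]
        have hiff : (s ++ [c, j] : Word d) = u ++ [i] ↔ u = s ++ [c] ∧ i = j := by
          rw [show (s ++ [c, j] : Word d) = (s ++ [c]) ++ [j] by simp, eq_comm,
            concat_eq_concat_iff]
        rw [if_congr hiff rfl rfl]
        by_cases h1 : u = (s ++ [c] : Word d) <;> by_cases h2 : i = j <;> simp [h1, h2]
      rw [hsplit]
      have h1 : (v.sum fun u cc => cc * (if c = i then (shuffleW s [j]) u else 0)) = 0 := by
        by_cases h : c = i
        · simp only [h, if_true]
          exact hv s j
        · simp [h]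
      rw [h1, zero_add]
      by_cases h2 : i = j
      · simp only [h2, if_true, one_mul]
        rw [sum_mul_delta]
      · simp [h2]
  -- ⟨iv, w ⧢ j⟩ = δ_{ij} v(w)
  have hiv : ∀ (w : Word d) (j : Fin d),
      pair (catMul (Finsupp.single [i] 1) v) (shuffleW w [j])
        = (if i = j then (1:ℝ) else 0) * v w := by
    intro w j
    rw [catMul_single_left, pair_mapDomain]
    rcases w with _ | ⟨a, t⟩
    · rw [shuffleW_nil]
      have heq : (v.sum fun u cc => cc * (Finsupp.single ([j] : Word d) 1) (i :: u))
          = v.sum fun u cc => cc *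
              ((if i = j then (1:ℝ) else 0) * (if u = ([] : Word d) then 1 else 0)) := by
        apply Finsupp.sum_congr
        intro u _
        congr 1
        rw [Finsupp.single_apply]
        have hiff : ([j] : Word d) = i :: u ↔ u = [] ∧ i = j := by
          constructor
          · intro h
            injection h with h h'
            exact ⟨h'.symm, h.symm⟩
          · rintro ⟨rfl, rfl⟩; rfl
        rw [if_congr hiff rfl rfl]
        by_cases h1 : u = ([] : Word d) <;> by_cases h2 : i = j <;> simp [h1, h2]
      rw [heq]
      by_cases h2 : i = j
      · simp only [h2, if_true, one_mul]
        rw [sum_mul_delta]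
      · simp [h2]
    · rw [shuffleW_cons]
      have hsplit : (v.sum fun u cc => cc *
            (((Finsupp.mapDomain (List.cons a) (shuffleW t [j])
              + Finsupp.single (j :: a :: t) 1) : T d) (i :: u)))
          = (v.sum fun u cc => cc * (if a = i then (shuffleW t [j]) u else 0))
            + (v.sum fun u cc => cc * ((if i = j then (1:ℝ) else 0)
                * (if u = (a :: t : Word d) then 1 else 0))) := by
        rw [← Finsupp.sum_add]
        apply Finsupp.sum_congr
        intro u _
        rw [Finsupp.add_apply, mapDomain_cons_apply_cons, mul_add]
        congr 1
        rw [Finsupp.single_apply]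
        have hiff : (j :: a :: t : Word d) = i :: u ↔ u = a :: t ∧ i = j := by
          constructor
          · intro h
            injection h with h h'
            exact ⟨h'.symm, h.symm⟩
          · rintro ⟨rfl, rfl⟩; rfl
        rw [if_congr hiff rfl rfl]
        by_cases h1 : u = (a :: t : Word d) <;> by_cases h2 : i = j <;> simp [h1, h2]
      rw [hsplit]
      have h1 : (v.sum fun u cc => cc * (if a = i then (shuffleW t [j]) u else 0)) = 0 := by
        by_cases h : a = i
        · simp only [h, if_true]
          exact hv t j
        · simp [h]
      rw [h1, zero_add]
      by_cases h2 : i = j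
      · simp only [h2, if_true, one_mul]
        rw [sum_mul_delta]
      · simp [h2]
  have key : ∀ (w : Word d) (j : Fin d),
      pair (catMul v (Finsupp.single [i] 1) - catMul (Finsupp.single [i] 1) v) (shuffleW w [j])
        = 0 := by
    intro w j
    rw [pair_sub_left, hvi, hiv, sub_self]
  refine ⟨fun w j => ?_, key⟩
  rw [key w j, mul_comm, sub_self]
end

section
/- Define H on words by H(i_1...i_n) = ((−1)^n/n!) i_1 ⧢ ... ⧢ i_n, extended linearly, and the right-closure operator rcl = ⧢ ∘ (id ⊗ H) ∘ Δ_•. Then for any grouplike element g of T((ℝ^d)) and any tensor w, ⟨g · exp(−z), w⟩ = ⟨g, rcl(w)⟩, where z = Σ_i ⟨g, i⟩ i is the degree-1 component of g and · is the concatenation product. In particular rcl is idempotent: rcl ∘ rcl = rcl. -/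
/-- The bilinear extension of the shuffle product. -/
noncomputable def shuffleE {d : ℕ} (f g : T d) : T d :=
  f.sum fun u a => g.sum fun v b => (a * b) • shuffleW u v

section basic
variable {d : ℕ}

lemma shuffleW_nil_left (v : Word d) : shuffleW [] v = Finsupp.single v 1 := by
  rw [shuffleW]

lemma shuffleW_nil_right (u : Word d) : shuffleW u [] = Finsupp.single u 1 := by
  cases u with
  | nil => rw [shuffleW]
  | cons a u => rw [shuffleW.eq_def]

lemma shuffleW_cons_cons (a b : Fin d) (u v : Word d) :
    shuffleW (a :: u) (b :: v) =
      Finsupp.mapDomain (List.cons a) (shuffleW u (b :: v)) +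
      Finsupp.mapDomain (List.cons b) (shuffleW (a :: u) v) := by
  rw [shuffleW]

lemma shuffleE_single_single (u v : Word d) (a b : ℝ) :
    shuffleE (Finsupp.single u a) (Finsupp.single v b) = (a * b) • shuffleW u v := by
  unfold shuffleE
  rw [Finsupp.sum_single_index, Finsupp.sum_single_index]
  · simp
  · rw [Finsupp.sum_single_index] <;> simp

lemma shuffleE_zero_left (y : T d) : shuffleE 0 y = 0 := by
  simp [shuffleE]

lemma shuffleE_zero_right (x : T d) : shuffleE x 0 = 0 := by
  simp [shuffleE]

lemma shuffleE_add_left (x₁ x₂ y : T d) :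
    shuffleE (x₁ + x₂) y = shuffleE x₁ y + shuffleE x₂ y := by
  unfold shuffleE
  rw [Finsupp.sum_add_index] <;> simp [add_mul, add_smul, Finsupp.sum_add]

lemma shuffleE_add_right (x y₁ y₂ : T d) :
    shuffleE x (y₁ + y₂) = shuffleE x y₁ + shuffleE x y₂ := by
  unfold shuffleE
  rw [← Finsupp.sum_add]
  apply Finsupp.sum_congr
  intro u _
  rw [Finsupp.sum_add_index] <;> simp [mul_add, add_smul]

lemma shuffleE_smul_left (c : ℝ) (x y : T d) :
    shuffleE (c • x) y = c • shuffleE x y := by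
  unfold shuffleE
  rw [Finsupp.sum_smul_index, Finsupp.smul_sum]
  · apply Finsupp.sum_congr
    intro u _
    rw [Finsupp.smul_sum]
    apply Finsupp.sum_congr
    intro v _
    rw [smul_smul, mul_assoc]
  · simp

lemma shuffleE_smul_right (c : ℝ) (x y : T d) :
    shuffleE x (c • y) = c • shuffleE x y := by
  unfold shuffleE
  rw [Finsupp.smul_sum]
  apply Finsupp.sum_congr
  intro u _
  rw [Finsupp.sum_smul_index, Finsupp.smul_sum]
  · apply Finsupp.sum_congr
    intro v _
    rw [smul_smul]
    ring_nf
  · simp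

lemma shuffleE_neg_right (x y : T d) : shuffleE x (-y) = -shuffleE x y := by
  have := shuffleE_smul_right (-1 : ℝ) x y
  simpa using this

lemma shuffleE_sum_left {ι : Type*} (s : Finset ι) (f : ι → T d) (y : T d) :
    shuffleE (∑ i ∈ s, f i) y = ∑ i ∈ s, shuffleE (f i) y := by
  classical
  induction s using Finset.induction with
  | empty => simp [shuffleE_zero_left]
  | insert _ _ h ih => simp [Finset.sum_insert h, shuffleE_add_left, ih]

lemma shuffleE_sum_right {ι : Type*} (s : Finset ι) (x : T d) (f : ι → T d) :
    shuffleE x (∑ i ∈ s, f i) = ∑ i ∈ s, shuffleE x (f i) := by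
  classical
  induction s using Finset.induction with
  | empty => simp [shuffleE_zero_right]
  | insert _ _ h ih => simp [Finset.sum_insert h, shuffleE_add_right, ih]

lemma shuffleE_nil_right (x : T d) : shuffleE x (Finsupp.single [] 1) = x := by
  unfold shuffleE
  conv_rhs => rw [← Finsupp.sum_single x]
  apply Finsupp.sum_congr
  intro u _
  rw [Finsupp.sum_single_index]
  · rw [shuffleW_nil_right, mul_one, Finsupp.smul_single, smul_eq_mul, mul_one]
  · simp

lemma shuffleE_nil_left (y : T d) : shuffleE (Finsupp.single [] 1) y = y := by
  unfold shuffleE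
  rw [Finsupp.sum_single_index]
  · conv_rhs => rw [← Finsupp.sum_single y]
    apply Finsupp.sum_congr
    intro v _
    rw [shuffleW_nil_left, one_mul, Finsupp.smul_single, smul_eq_mul, mul_one]
  · simp

end basic

section assoc
variable {d : ℕ}

theorem shuffleW_comm : ∀ u v : Word d, shuffleW u v = shuffleW v u
  | [], v => by rw [shuffleW_nil_left, shuffleW_nil_right]
  | a :: u, [] => by rw [shuffleW_nil_left, shuffleW_nil_right]
  | a :: u, b :: v => by
      rw [shuffleW_cons_cons, shuffleW_cons_cons b, add_comm,
          shuffleW_comm u (b :: v), shuffleW_comm (a :: u) v]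
  termination_by u v => u.length + v.length

lemma shuffleE_comm (x y : T d) : shuffleE x y = shuffleE y x := by
  unfold shuffleE
  rw [Finsupp.sum_comm]
  apply Finsupp.sum_congr; intro v _
  apply Finsupp.sum_congr; intro u _
  rw [mul_comm, shuffleW_comm]

lemma shuffleE_cons_left (a c : Fin d) (w : Word d) (x : T d) :
    shuffleE (Finsupp.mapDomain (List.cons a) x) (Finsupp.single (c :: w) 1) =
      Finsupp.mapDomain (List.cons a) (shuffleE x (Finsupp.single (c :: w) 1)) +
      Finsupp.mapDomain (List.cons c)
        (shuffleE (Finsupp.mapDomain (List.cons a) x) (Finsupp.single w 1)) := by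
  induction x using Finsupp.induction_linear with
  | zero => simp [shuffleE_zero_left]
  | add f g hf hg =>
      simp only [Finsupp.mapDomain_add, shuffleE_add_left, hf, hg]
      abel
  | single t r =>
      rw [Finsupp.mapDomain_single, shuffleE_single_single, shuffleE_single_single,
        shuffleE_single_single, shuffleW_cons_cons, smul_add]
      rw [mul_one, ← Finsupp.mapDomain_smul, ← Finsupp.mapDomain_smul]

lemma shuffleE_cons_right (a b : Fin d) (u : Word d) (y : T d) :
    shuffleE (Finsupp.single (a :: u) 1) (Finsupp.mapDomain (List.cons b) y) =
      Finsupp.mapDomain (List.cons a)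
        (shuffleE (Finsupp.single u 1) (Finsupp.mapDomain (List.cons b) y)) +
      Finsupp.mapDomain (List.cons b) (shuffleE (Finsupp.single (a :: u) 1) y) := by
  induction y using Finsupp.induction_linear with
  | zero => simp [shuffleE_zero_right]
  | add f g hf hg =>
      simp only [Finsupp.mapDomain_add, shuffleE_add_right, hf, hg]
      abel
  | single t r =>
      rw [Finsupp.mapDomain_single, shuffleE_single_single, shuffleE_single_single,
        shuffleE_single_single, shuffleW_cons_cons, smul_add]
      rw [one_mul, ← Finsupp.mapDomain_smul, ← Finsupp.mapDomain_smul]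

theorem shuffle_assoc3 : ∀ u v w : Word d,
    shuffleE (shuffleW u v) (Finsupp.single w 1) =
      shuffleE (Finsupp.single u 1) (shuffleW v w)
  | [], v, w => by
      rw [shuffleW_nil_left, shuffleE_nil_left, shuffleE_single_single]
      simp
  | a :: u, [], w => by
      rw [shuffleW_nil_right, shuffleW_nil_left, shuffleE_single_single]
  | a :: u, b :: v, [] => by
      rw [shuffleE_nil_right, shuffleW_nil_right, shuffleE_single_single]
      simp
  | a :: u, b :: v, c :: w => by
      have L1 : shuffleE (shuffleW (a :: u) (b :: v)) (Finsupp.single (c :: w) 1) =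
          Finsupp.mapDomain (List.cons a)
            (shuffleE (shuffleW u (b :: v)) (Finsupp.single (c :: w) 1)) +
          Finsupp.mapDomain (List.cons b)
            (shuffleE (shuffleW (a :: u) v) (Finsupp.single (c :: w) 1)) +
          Finsupp.mapDomain (List.cons c)
            (shuffleE (shuffleW (a :: u) (b :: v)) (Finsupp.single w 1)) := by
        simp only [shuffleW_cons_cons, shuffleE_add_left, shuffleE_cons_left,
          Finsupp.mapDomain_add]
        abel
      have R1 : shuffleE (Finsupp.single (a :: u) 1) (shuffleW (b :: v) (c :: w)) =
          Finsupp.mapDomain (List.cons a)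
            (shuffleE (Finsupp.single u 1) (shuffleW (b :: v) (c :: w))) +
          Finsupp.mapDomain (List.cons b)
            (shuffleE (Finsupp.single (a :: u) 1) (shuffleW v (c :: w))) +
          Finsupp.mapDomain (List.cons c)
            (shuffleE (Finsupp.single (a :: u) 1) (shuffleW (b :: v) w)) := by
        simp only [shuffleW_cons_cons, shuffleE_add_right, shuffleE_cons_right,
          Finsupp.mapDomain_add]
        abel
      rw [L1, R1, shuffle_assoc3 u (b :: v) (c :: w), shuffle_assoc3 (a :: u) v (c :: w),
        shuffle_assoc3 (a :: u) (b :: v) w]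
  termination_by u v w => u.length + v.length + w.length

lemma shuffle_assoc3' (u v : Word d) (y : T d) :
    shuffleE (shuffleW u v) y =
      shuffleE (Finsupp.single u 1) (shuffleE (Finsupp.single v 1) y) := by
  induction y using Finsupp.induction_linear with
  | zero => simp [shuffleE_zero_right]
  | add f g hf hg => rw [shuffleE_add_right, hf, hg, shuffleE_add_right, shuffleE_add_right]
  | single w r =>
      have h1 : (Finsupp.single w r : T d) = r • Finsupp.single w 1 := by
        rw [Finsupp.smul_single, smul_eq_mul, mul_one]
      rw [h1, shuffleE_smul_right, shuffleE_smul_right, shuffleE_smul_right,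
        shuffle_assoc3]
      congr 1
      rw [shuffleE_single_single, one_mul, one_smul]

end assoc

noncomputable def pairF {d : ℕ} (g : Word d → ℝ) (f : T d) : ℝ := f.sum fun x c => c * g x

def Grouplike {d : ℕ} (g : Word d → ℝ) : Prop :=
  g [] = 1 ∧ ∀ u v : Word d, pairF g (shuffleW u v) = g u * g v


/-- `H(i₁⋯iₙ) = ((-1)^n/n!) i₁ ⧢ ⋯ ⧢ iₙ`. -/
noncomputable def Hword {d : ℕ} (w : Word d) : T d :=
  ((-1 : ℝ) ^ w.length / w.length.factorial) •
    (w.map fun i => ([i] : Word d)).foldr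
      (fun u acc => shuffleE (Finsupp.single u 1) acc) (Finsupp.single [] 1)


section hword
variable {d : ℕ}

/-- unscaled letter product -/
noncomputable def LP {d : ℕ} (w : Word d) : T d :=
  (w.map fun i => ([i] : Word d)).foldr
    (fun u acc => shuffleE (Finsupp.single u 1) acc) (Finsupp.single [] 1)

lemma LP_nil : LP ([] : Word d) = Finsupp.single [] 1 := rfl

lemma LP_cons (i : Fin d) (w : Word d) :
    LP (i :: w) = shuffleE (Finsupp.single [i] 1) (LP w) := rfl

lemma Hword_eq (w : Word d) :
    Hword w = ((-1 : ℝ) ^ w.length / w.length.factorial) • LP w := rfl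

lemma Hword_nil : Hword ([] : Word d) = Finsupp.single [] 1 := by
  rw [Hword_eq, LP_nil]; simp

lemma shuffleE_letter_swap (a i : Fin d) (y : T d) :
    shuffleE (Finsupp.single [a] 1) (shuffleE (Finsupp.single [i] 1) y) =
      shuffleE (Finsupp.single [i] 1) (shuffleE (Finsupp.single [a] 1) y) := by
  rw [← shuffle_assoc3', shuffleW_comm, shuffle_assoc3']

lemma LP_insert (i : Fin d) : ∀ (p : ℕ) (w : Word d),
    LP (w.take p ++ i :: w.drop p) = shuffleE (Finsupp.single [i] 1) (LP w)
  | 0, w => by simp [LP_cons]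
  | p + 1, [] => by simp [LP_cons]
  | p + 1, a :: w => by
      simp only [List.take_succ_cons, List.drop_succ_cons, List.cons_append, LP_cons]
      rw [LP_insert i p w, shuffleE_letter_swap]

lemma length_insert (i : Fin d) (u : Word d) (p : ℕ) (hp : p ≤ u.length) :
    (u.take p ++ i :: u.drop p).length = u.length + 1 := by
  simp [List.length_take, List.length_drop]
  omega

lemma Hword_insert_sum (i : Fin d) (u : Word d) :
    ∑ p ∈ Finset.range (u.length + 1), Hword (u.take p ++ i :: u.drop p) =
      -(shuffleE (Finsupp.single [i] 1) (Hword u)) := by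
  have hterm : ∀ p ∈ Finset.range (u.length + 1),
      Hword (u.take p ++ i :: u.drop p) =
        ((-1 : ℝ) ^ (u.length + 1) / (u.length + 1).factorial) •
          shuffleE (Finsupp.single [i] 1) (LP u) := by
    intro p hp
    rw [Finset.mem_range] at hp
    rw [Hword_eq, length_insert i u p (by omega), LP_insert]
  rw [Finset.sum_congr rfl hterm, Finset.sum_const, Finset.card_range]
  rw [Hword_eq, shuffleE_smul_right, ← Nat.cast_smul_eq_nsmul ℝ, smul_smul, ← neg_smul]
  congr 1
  have h2 : ((u.length + 1).factorial : ℝ) = (u.length + 1) * u.length.factorial := by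
    rw [Nat.factorial_succ]; push_cast; ring
  have h3 : (u.length.factorial : ℝ) ≠ 0 := by
    exact_mod_cast Nat.factorial_ne_zero u.length
  push_cast
  rw [h2]
  field_simp
  ring

lemma shuffleW_single_letter (i : Fin d) : ∀ u : Word d,
    shuffleW u [i] =
      ∑ p ∈ Finset.range (u.length + 1), Finsupp.single (u.take p ++ i :: u.drop p) 1
  | [] => by simp [shuffleW_nil_left]
  | a :: u => by
      rw [shuffleW_cons_cons, shuffleW_nil_right, shuffleW_single_letter i u,
        Finsupp.mapDomain_finset_sum]
      conv_rhs => rw [List.length_cons, Finset.sum_range_succ']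
      simp only [Finsupp.mapDomain_single, List.take_succ_cons, List.drop_succ_cons,
        List.cons_append, List.take_zero, List.drop_zero, List.nil_append]

end hword


section pairf
variable {d : ℕ} {g : Word d → ℝ}

lemma pairF_single (w : Word d) (c : ℝ) : pairF g (Finsupp.single w c) = c * g w := by
  unfold pairF
  rw [Finsupp.sum_single_index]
  simp

lemma pairF_zero : pairF g (0 : T d) = 0 := by simp [pairF]

lemma pairF_add (x y : T d) : pairF g (x + y) = pairF g x + pairF g y := by
  unfold pairF
  rw [Finsupp.sum_add_index] <;> simp [add_mul]

lemma pairF_smul (c : ℝ) (x : T d) : pairF g (c • x) = c * pairF g x := by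
  unfold pairF
  rw [Finsupp.sum_smul_index (by simp), Finsupp.mul_sum]
  apply Finsupp.sum_congr
  intro w _
  ring

lemma pairF_finset_sum {ι : Type*} (s : Finset ι) (f : ι → T d) :
    pairF g (∑ i ∈ s, f i) = ∑ i ∈ s, pairF g (f i) := by
  classical
  induction s using Finset.induction with
  | empty => simp [pairF_zero]
  | insert _ _ h ih => simp [Finset.sum_insert h, pairF_add, ih]

lemma pairF_shuffleE (hg : Grouplike g) (x y : T d) :
    pairF g (shuffleE x y) = pairF g x * pairF g y := by
  induction x using Finsupp.induction_linear with
  | zero => simp [shuffleE_zero_left, pairF_zero]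
  | add f f' hf hf' => rw [shuffleE_add_left, pairF_add, hf, hf', pairF_add, add_mul]
  | single u a =>
      induction y using Finsupp.induction_linear with
      | zero => simp [shuffleE_zero_right, pairF_zero]
      | add f f' hf hf' => rw [shuffleE_add_right, pairF_add, hf, hf', pairF_add, mul_add]
      | single v b =>
          rw [shuffleE_single_single, pairF_smul, hg.2, pairF_single, pairF_single]
          ring

lemma pairF_LP (hg : Grouplike g) (v : Word d) :
    pairF g (LP v) = (v.map fun i => g [i]).prod := by
  induction v with
  | nil => rw [LP_nil, pairF_single]; simp [hg.1]
  | cons i v ih =>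
      rw [LP_cons, pairF_shuffleE hg, pairF_single, ih]
      simp

lemma pairF_Hword (hg : Grouplike g) (v : Word d) :
    pairF g (Hword v) =
      ((-1 : ℝ) ^ v.length / v.length.factorial) * (v.map fun i => g [i]).prod := by
  rw [Hword_eq, pairF_smul, pairF_LP hg]

end pairf

/-- The right-closure operator `rcl = ⧢ ∘ (id ⊗ H) ∘ Δ_•`. -/
noncomputable def rcl {d : ℕ} (x : T d) : T d :=
  x.sum fun w c => c • ∑ k ∈ Finset.range (w.length + 1),
    shuffleE (Finsupp.single (w.take k) 1) (Hword (w.drop k))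

/-- The concatenation product of tensor series, via Chen's formula. -/
noncomputable def mulFun {d : ℕ} (g h : Word d → ℝ) : Word d → ℝ :=
  fun u => ∑ k ∈ Finset.range (u.length + 1), g (u.take k) * h (u.drop k)

/-- The series `exp(-z)` for `z = ∑ zᵢ·i` of degree one. -/
noncomputable def expNeg {d : ℕ} (z : Fin d → ℝ) : Word d → ℝ :=
  fun u => ((-1 : ℝ) ^ u.length / u.length.factorial) * (u.map z).prod

section rclsec
variable {d : ℕ}

noncomputable def Fw {d : ℕ} (w : Word d) : T d :=
  ∑ k ∈ Finset.range (w.length + 1),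
    shuffleE (Finsupp.single (w.take k) 1) (Hword (w.drop k))

lemma rcl_eq (x : T d) : rcl x = x.sum fun w c => c • Fw w := rfl

lemma Fw_def (w : Word d) : Fw w = ∑ k ∈ Finset.range (w.length + 1),
    shuffleE (Finsupp.single (w.take k) 1) (Hword (w.drop k)) := rfl

lemma rcl_single (w : Word d) (c : ℝ) : rcl (Finsupp.single w c) = c • Fw w := by
  rw [rcl_eq]; exact Finsupp.sum_single_index (by simp)

lemma rcl_zero : rcl (0 : T d) = 0 := by simp [rcl_eq]

lemma rcl_add (x y : T d) : rcl (x + y) = rcl x + rcl y := by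
  rw [rcl_eq, rcl_eq, rcl_eq]
  exact Finsupp.sum_add_index' (by simp) (by intros; rw [add_smul])

lemma rcl_smul (c : ℝ) (x : T d) : rcl (c • x) = c • rcl x := by
  rw [rcl_eq, rcl_eq, Finsupp.sum_smul_index (by simp), Finsupp.smul_sum]
  apply Finsupp.sum_congr
  intros; rw [mul_smul]

lemma rcl_finset_sum {ι : Type*} (s : Finset ι) (f : ι → T d) :
    rcl (∑ i ∈ s, f i) = ∑ i ∈ s, rcl (f i) := by
  classical
  induction s using Finset.induction with
  | empty => simp [rcl_zero]
  | insert _ _ h ih => simp [Finset.sum_insert h, rcl_add, ih]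

/- take/drop of an inserted-letter word -/

lemma ins_take_le (u : Word d) (i : Fin d) {k p : ℕ} (hk : k ≤ p) (hp : p ≤ u.length) :
    (u.take p ++ i :: u.drop p).take k = u.take k := by
  rw [List.take_append_of_le_length (by simp [List.length_take]; omega), List.take_take]
  congr 1; omega

lemma ins_drop_le (u : Word d) (i : Fin d) {k p : ℕ} (hk : k ≤ p) (hp : p ≤ u.length) :
    (u.take p ++ i :: u.drop p).drop k =
      (u.drop k).take (p - k) ++ i :: (u.drop k).drop (p - k) := by
  rw [List.drop_append_of_le_length (by simp [List.length_take]; omega), List.drop_take,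
    List.drop_drop]
  have : k + (p - k) = p := by omega
  rw [this]

lemma ins_take_gt (u : Word d) (i : Fin d) {p j : ℕ} (hp : p ≤ j) (hj : j ≤ u.length) :
    (u.take p ++ i :: u.drop p).take (j + 1) =
      (u.take j).take p ++ i :: (u.take j).drop p := by
  rw [List.take_append,
    List.take_of_length_le (by simp [List.length_take]; omega), List.length_take]
  have h1 : j + 1 - min p u.length = (j - p) + 1 := by omega
  rw [h1, List.take_succ_cons, List.take_take, List.drop_take, min_eq_left hp]

lemma ins_drop_gt (u : Word d) (i : Fin d) {p j : ℕ} (hp : p ≤ j) (hj : j ≤ u.length) :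
    (u.take p ++ i :: u.drop p).drop (j + 1) = u.drop j := by
  rw [List.drop_append,
    List.drop_eq_nil_of_le (by simp [List.length_take]; omega), List.nil_append,
    List.length_take]
  have h1 : j + 1 - min p u.length = (j - p) + 1 := by omega
  rw [h1, List.drop_succ_cons, List.drop_drop]
  congr 1; omega

/- triangle reindexing -/

lemma tri1 {M : Type*} [AddCommMonoid M] (n : ℕ) (f : ℕ → ℕ → M) :
    ∑ p ∈ Finset.range (n + 1), ∑ k ∈ Finset.range (p + 1), f p k =
      ∑ k ∈ Finset.range (n + 1), ∑ p ∈ Finset.Ico k (n + 1), f p k := by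
  simp only [Finset.range_eq_Ico]
  exact (Finset.sum_Ico_Ico_comm 0 (n + 1) (fun k p => f p k)).symm

lemma tri2 {M : Type*} [AddCommMonoid M] (n : ℕ) (f : ℕ → ℕ → M) :
    ∑ p ∈ Finset.range (n + 1), ∑ j ∈ Finset.Ico p (n + 1), f p j =
      ∑ j ∈ Finset.range (n + 1), ∑ p ∈ Finset.range (j + 1), f p j := by
  simp only [Finset.range_eq_Ico]
  exact Finset.sum_Ico_Ico_comm 0 (n + 1) f

/-- the key cancellation: `rcl` of the sum of all letter-insertions is zero -/
lemma sum_Fw_insert (i : Fin d) (u : Word d) :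
    ∑ p ∈ Finset.range (u.length + 1), Fw (u.take p ++ i :: u.drop p) = 0 := by
  set n := u.length with hn
  set Tpk : ℕ → ℕ → T d := fun p k =>
    shuffleE (Finsupp.single ((u.take p ++ i :: u.drop p).take k) 1)
      (Hword ((u.take p ++ i :: u.drop p).drop k)) with hTpk
  have hT : ∀ p ∈ Finset.range (n + 1), Fw (u.take p ++ i :: u.drop p) =
      (∑ k ∈ Finset.range (p + 1), Tpk p k) +
      ∑ k ∈ Finset.Ico (p + 1) (n + 2), Tpk p k := by
    intro p hp
    rw [Finset.mem_range] at hp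
    rw [Fw_def, length_insert i u p (by omega), Finset.range_eq_Ico,
      ← Finset.sum_Ico_consecutive _ (Nat.zero_le (p + 1)) (by omega),
      ← Finset.range_eq_Ico]
  rw [Finset.sum_congr rfl hT, Finset.sum_add_distrib]
  -- part A
  have hA : ∑ p ∈ Finset.range (n + 1), ∑ k ∈ Finset.range (p + 1), Tpk p k =
      ∑ k ∈ Finset.range (n + 1),
        -(shuffleE (Finsupp.single (u.take k) 1)
          (shuffleE (Finsupp.single [i] 1) (Hword (u.drop k)))) := by
    rw [tri1]
    apply Finset.sum_congr rfl
    intro k hk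
    rw [Finset.mem_range] at hk
    rw [Finset.sum_Ico_eq_sum_range]
    have hterm : ∀ q ∈ Finset.range (n + 1 - k), Tpk (k + q) k =
        shuffleE (Finsupp.single (u.take k) 1)
          (Hword ((u.drop k).take q ++ i :: (u.drop k).drop q)) := by
      intro q hq
      rw [Finset.mem_range] at hq
      rw [hTpk]
      simp only
      rw [ins_take_le u i (by omega) (by omega), ins_drop_le u i (by omega) (by omega)]
      have : k + q - k = q := by omega
      rw [this]
    rw [Finset.sum_congr rfl hterm, ← shuffleE_sum_right]
    have hlen : n + 1 - k = (u.drop k).length + 1 := by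
      rw [List.length_drop]; omega
    rw [hlen, Hword_insert_sum, shuffleE_neg_right]
  -- part B
  have hB : ∑ p ∈ Finset.range (n + 1), ∑ k ∈ Finset.Ico (p + 1) (n + 2), Tpk p k =
      ∑ j ∈ Finset.range (n + 1),
        shuffleE (Finsupp.single (u.take j) 1)
          (shuffleE (Finsupp.single [i] 1) (Hword (u.drop j))) := by
    have hre : ∀ p ∈ Finset.range (n + 1),
        ∑ k ∈ Finset.Ico (p + 1) (n + 2), Tpk p k =
        ∑ j ∈ Finset.Ico p (n + 1), Tpk p (j + 1) := by
      intro p hp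
      rw [Finset.mem_range] at hp
      rw [Finset.sum_Ico_eq_sum_range, Finset.sum_Ico_eq_sum_range]
      have h1 : n + 2 - (p + 1) = n + 1 - p := by omega
      rw [h1]
      apply Finset.sum_congr rfl
      intro t _
      congr 1
      omega
    rw [Finset.sum_congr rfl hre, tri2]
    apply Finset.sum_congr rfl
    intro j hj
    rw [Finset.mem_range] at hj
    have hterm : ∀ p ∈ Finset.range (j + 1), Tpk p (j + 1) =
        shuffleE (Finsupp.single ((u.take j).take p ++ i :: (u.take j).drop p) 1)
          (Hword (u.drop j)) := by
      intro p hp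
      rw [Finset.mem_range] at hp
      rw [hTpk]
      simp only
      rw [ins_take_gt u i (by omega) (by omega), ins_drop_gt u i (by omega) (by omega)]
    rw [Finset.sum_congr rfl hterm, ← shuffleE_sum_left]
    have hlen : (u.take j).length = j := by
      rw [List.length_take]; omega
    have hsh : ∑ p ∈ Finset.range (j + 1),
        Finsupp.single ((u.take j).take p ++ i :: (u.take j).drop p) (1 : ℝ) =
        shuffleW (u.take j) [i] := by
      rw [shuffleW_single_letter, hlen]
    rw [hsh, shuffle_assoc3']
  rw [hA, hB, ← Finset.sum_add_distrib]
  apply Finset.sum_eq_zero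
  intro k _
  exact neg_add_cancel _

lemma rcl_shuffleW_letter (u : Word d) (i : Fin d) : rcl (shuffleW u [i]) = 0 := by
  rw [shuffleW_single_letter, rcl_finset_sum]
  have : ∀ p ∈ Finset.range (u.length + 1),
      rcl (Finsupp.single (u.take p ++ i :: u.drop p) (1 : ℝ)) =
      Fw (u.take p ++ i :: u.drop p) := by
    intro p _
    rw [rcl_single, one_smul]
  rw [Finset.sum_congr rfl this, sum_Fw_insert]

lemma rcl_shuffle_letter (x : T d) (i : Fin d) :
    rcl (shuffleE x (Finsupp.single [i] 1)) = 0 := by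
  induction x using Finsupp.induction_linear with
  | zero => rw [shuffleE_zero_left, rcl_zero]
  | add f g hf hg => rw [shuffleE_add_left, rcl_add, hf, hg, add_zero]
  | single u r =>
      rw [shuffleE_single_single, rcl_smul, rcl_shuffleW_letter, smul_zero]

lemma rcl_letter_shuffle (i : Fin d) (x : T d) :
    rcl (shuffleE (Finsupp.single [i] 1) x) = 0 := by
  rw [shuffleE_comm]; exact rcl_shuffle_letter x i

lemma rcl_Fw (w : Word d) : rcl (Fw w) = Fw w := by
  conv_lhs => rw [Fw_def]
  rw [rcl_finset_sum, Finset.sum_range_succ]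
  have hlast : rcl (shuffleE (Finsupp.single (w.take w.length) 1)
      (Hword (w.drop w.length))) = Fw w := by
    rw [List.take_length, List.drop_length, Hword_nil, shuffleE_nil_right, rcl_single, one_smul]
  rw [hlast]
  have hz : ∀ k ∈ Finset.range w.length,
      rcl (shuffleE (Finsupp.single (w.take k) 1) (Hword (w.drop k))) = 0 := by
    intro k hk
    rw [Finset.mem_range] at hk
    obtain ⟨a, t, ht⟩ : ∃ a t, w.drop k = a :: t := by
      cases h : w.drop k with
      | nil => exfalso; rw [List.drop_eq_nil_iff] at h; omega
      | cons a t => exact ⟨a, t, rfl⟩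
    rw [ht, Hword_eq, LP_cons, shuffleE_smul_right, rcl_smul, ← shuffle_assoc3',
      shuffleW_comm, shuffle_assoc3', rcl_letter_shuffle, smul_zero]
  rw [Finset.sum_congr rfl hz, Finset.sum_const_zero, zero_add, Fw_def]

lemma rcl_idem (x : T d) : rcl (rcl x) = rcl x := by
  rw [rcl_eq x, Finsupp.sum, rcl_finset_sum]
  apply Finset.sum_congr rfl
  intro w _
  rw [rcl_smul, rcl_Fw]

lemma part1 (g : Word d → ℝ) (hg : Grouplike g) (x : T d) :
    pairF (mulFun g (expNeg fun i => g [i])) x = pairF g (rcl x) := by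
  rw [rcl_eq, Finsupp.sum, pairF_finset_sum]
  have hR : ∀ w ∈ x.support, pairF g (x w • Fw w) = x w * pairF g (Fw w) :=
    fun w _ => pairF_smul _ _
  rw [Finset.sum_congr rfl hR]
  have hL : pairF (mulFun g (expNeg fun i => g [i])) x =
      ∑ w ∈ x.support, x w * mulFun g (expNeg fun i => g [i]) w := rfl
  rw [hL]
  apply Finset.sum_congr rfl
  intro w _
  congr 1
  rw [Fw_def, pairF_finset_sum]
  have hM : mulFun g (expNeg fun i => g [i]) w = ∑ k ∈ Finset.range (w.length + 1),
      g (w.take k) * expNeg (fun i => g [i]) (w.drop k) := rfl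
  rw [hM]
  apply Finset.sum_congr rfl
  intro k _
  rw [pairF_shuffleE hg, pairF_single, pairF_Hword hg, one_mul]
  rfl

end rclsec

/-- For grouplike `g` with degree-one part `z`: `⟨g · exp(-z), x⟩ = ⟨g, rcl x⟩`;
in particular `rcl` is idempotent. -/
theorem stmt_12 {d : ℕ} :
    (∀ g : Word d → ℝ, Grouplike g → ∀ x : T d,
      pairF (mulFun g (expNeg fun i => g [i])) x = pairF g (rcl x)) ∧
    (∀ x : T d, rcl (rcl x) = rcl x) := by
  exact ⟨part1, rcl_idem⟩
end
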